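/- Let N > 0 and a ≠ 0 be real. For all integers k₁, k₂ ≥ 0 there exists a unique monic polynomial P_{k₁,k₂} of degree k₁ + k₂ such that ∫_ℝ P_{k₁,k₂}(x) xʲ w₁(x) dx = 0 for 0 ≤ j ≤ k₁ − 1 and ∫_ℝ P_{k₁,k₂}(x) xʲ w₂(x) dx = 0 for 0 ≤ j ≤ k₂ − 1. Moreover the normalization constants h^{(1)}_{k₁,k₂} = ∫_ℝ P_{k₁,k₂}(x) x^{k₁} w₁(x) dx and h^{(2)}_{k₁,k₂} = ∫_ℝ P_{k₁,k₂}(x) x^{k₂} w₂(x) dx are nonzero. -/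

import Mathlib

/-!
Both existence with uniqueness and the nonvanishing of `h⁽¹⁾, h⁽²⁾` reduce, by linear algebra
in degree `< k₁ + k₂`, to one degree bound: a nonzero `Q` orthogonal to `xʲ w₁` for `j < k₁` and
to `xʲ w₂` for `j < k₂` has degree at least `k₁ + k₂`. Since `w₁ = e^{2Nax} w₂`, put `g = Q w₂`.
If `∫ g = 0`, the primitive `G(x) = ∫_{-∞}^x g` again decays at both ends, and integrating by
parts transfers to `G` one fewer moment against `xʲ` but every moment against `xʲ e^{cx}`
(`c = 2Na ≠ 0`), because `q' + cq = xʲ` has a polynomial solution of degree `j`. Conversely, by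
the mean value theorem `g = G'` has one more sign change than `G`, as `G` vanishes at `±∞`.
After `k₂` steps only the moments of `G e^{cx}` against `xʲ`, `j < k₁`, remain, so `g`, and hence
`Q`, changes sign at least `k₁ + k₂` times; by Rolle, `Q^{(k₁+k₂)} ≠ 0`.
-/

open MeasureTheory Filter Topology Polynomial Asymptotics

noncomputable section

/-- first weight -/
def w1 (N a x : ℝ) : ℝ := Real.exp (-N * (x ^ 2 / 2 - a * x))

/-- second weight -/
def w2 (N a x : ℝ) : ℝ := Real.exp (-N * (x ^ 2 / 2 + a * x))

/-- `P` is the multiple Hermite polynomial with indices `k₁, k₂`. -/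
def IsMHP (N a : ℝ) (k₁ k₂ : ℕ) (P : Polynomial ℝ) : Prop :=
  P.Monic ∧ P.natDegree = k₁ + k₂ ∧
  (∀ j < k₁, ∫ x : ℝ, P.eval x * x ^ j * w1 N a x = 0) ∧
  (∀ j < k₂, ∫ x : ℝ, P.eval x * x ^ j * w2 N a x = 0)

/-- the normalization constant `h⁽¹⁾` -/
def hc1 (N a : ℝ) (k₁ : ℕ) (P : Polynomial ℝ) : ℝ :=
  ∫ x : ℝ, P.eval x * x ^ k₁ * w1 N a x

/-- the normalization constant `h⁽²⁾` -/
def hc2 (N a : ℝ) (k₂ : ℕ) (P : Polynomial ℝ) : ℝ :=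
  ∫ x : ℝ, P.eval x * x ^ k₂ * w2 N a x

open Real Set

lemma integrable_exp_neg_mul_abs {c : ℝ} (hc : 0 < c) :
    Integrable fun x : ℝ => exp (-c * |x|) := by
  rw [← integrableOn_univ, ← Iic_union_Ioi (a := 0)]
  refine ((integrableOn_exp_mul_Iic hc 0).congr_fun (fun x hx => ?_) measurableSet_Iic).union
    ((exp_neg_integrableOn_Ioi 0 hc).congr_fun (fun x hx => ?_) measurableSet_Ioi)
  · rw [abs_of_nonpos hx]; ring_nf
  · rw [abs_of_pos hx]

def SuperexpDecay (g : ℝ → ℝ) : Prop :=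
  Continuous g ∧ ∀ c : ℝ, g =O[⊤] fun x => exp (-c * |x|)

namespace SuperexpDecay

variable {g h : ℝ → ℝ}

lemma integrable (hg : SuperexpDecay g) : Integrable g :=
  (hg.2 1).integrable hg.1.aestronglyMeasurable (integrable_exp_neg_mul_abs one_pos)

lemma tendsto_cocompact (hg : SuperexpDecay g) : Tendsto g (cocompact ℝ) (𝓝 0) := by
  refine ((hg.2 1).mono le_top).trans_tendsto ?_
  refine (tendsto_exp_neg_atTop_nhds_zero.comp (tendsto_norm_cocompact_atTop (E := ℝ))).congr
    fun x => ?_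
  simp

lemma add (hg : SuperexpDecay g) (hh : SuperexpDecay h) : SuperexpDecay (fun x => g x + h x) :=
  ⟨hg.1.add hh.1, fun c => (hg.2 c).add (hh.2 c)⟩

lemma const_mul (hg : SuperexpDecay g) (a : ℝ) : SuperexpDecay (fun x => a * g x) :=
  ⟨continuous_const.mul hg.1, fun c => (hg.2 c).const_mul_left a⟩

lemma mul_of_isBigO (hg : SuperexpDecay g) (hh : Continuous h) {b : ℝ}
    (hb : h =O[⊤] fun x => exp (b * |x|)) : SuperexpDecay (fun x => h x * g x) :=
  ⟨hh.mul hg.1, fun c => (hb.mul (hg.2 (c + b))).congr_right fun x => by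
    rw [← exp_add]; ring_nf⟩

lemma exp_mul (hg : SuperexpDecay g) (b : ℝ) : SuperexpDecay (fun x => exp (b * x) * g x) := by
  refine hg.mul_of_isBigO (by fun_prop) (b := |b|) (isBigO_top.mpr ⟨1, fun x => ?_⟩)
  simp only [norm_eq_abs, abs_exp, one_mul, exp_le_exp, ← abs_mul]
  exact le_abs_self _

lemma id_mul (hg : SuperexpDecay g) : SuperexpDecay (fun x => x * g x) := by
  refine hg.mul_of_isBigO continuous_id (b := 1) (isBigO_top.mpr ⟨1, fun x => ?_⟩)
  simpa [abs_exp] using (le_add_of_nonneg_right zero_le_one).trans (add_one_le_exp |x|)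

lemma poly_mul (hg : SuperexpDecay g) (p : ℝ[X]) : SuperexpDecay (fun x => p.eval x * g x) := by
  induction p using Polynomial.induction_on' with
  | add p q hp hq => simpa only [eval_add, add_mul] using hp.add hq
  | monomial n a =>
    induction n with
    | zero => simpa using hg.const_mul a
    | succ n ih =>
      convert ih.id_mul using 2 with x
      simp only [eval_monomial]
      ring

lemma mul_polyExp (hg : SuperexpDecay g) (q : ℝ[X]) (c : ℝ) :
    SuperexpDecay (fun x => g x * (q.eval x * exp (c * x))) := by
  convert (hg.exp_mul c).poly_mul q using 2 with x
  ring

end SuperexpDecay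

lemma superexpDecay_exp_neg_mul_sq {b : ℝ} (hb : 0 < b) :
    SuperexpDecay fun x => exp (-b * x ^ 2) := by
  refine ⟨by fun_prop, fun c => isBigO_top.mpr ⟨exp (c ^ 2 / (4 * b)), fun x => ?_⟩⟩
  simp only [norm_eq_abs, abs_exp, ← exp_add, exp_le_exp]
  have hsq : c ^ 2 / (4 * b) - c * |x| + b * x ^ 2 = (2 * b * |x| - c) ^ 2 / (4 * b) := by
    field_simp
    ring_nf
    rw [sq_abs]
  have : 0 ≤ (2 * b * |x| - c) ^ 2 / (4 * b) := by positivity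
  linarith

def antideriv (g : ℝ → ℝ) (x : ℝ) : ℝ := ∫ t in Iic x, g t

section antideriv

variable {g : ℝ → ℝ}

lemma hasDerivAt_antideriv (hg : SuperexpDecay g) (x : ℝ) :
    HasDerivAt (antideriv g) (g x) x := by
  have hint := hg.integrable
  have heq : antideriv g = fun y => antideriv g 0 + ∫ t in (0 : ℝ)..y, g t := by
    funext y
    rw [← intervalIntegral.integral_Iic_sub_Iic hint.integrableOn hint.integrableOn,
      antideriv, antideriv, add_sub_cancel]
  rw [heq]
  exact (intervalIntegral.integral_hasDerivAt_right hint.intervalIntegrable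
    hint.aestronglyMeasurable.stronglyMeasurableAtFilter hg.1.continuousAt).const_add _

lemma antideriv_eq_neg_setIntegral_Ioi (hg : Integrable g) (h0 : ∫ x, g x = 0) (x : ℝ) :
    antideriv g x = -∫ t in Ioi x, g t := by
  rw [antideriv, eq_neg_iff_add_eq_zero, ← h0, ← setIntegral_union (Iic_disjoint_Ioi le_rfl)
    measurableSet_Ioi hg.integrableOn hg.integrableOn, Iic_union_Ioi, setIntegral_univ]

lemma exists_antideriv_ne_zero (hg : SuperexpDecay g) (hne : ∃ x, g x ≠ 0) :
    ∃ x, antideriv g x ≠ 0 := by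
  obtain ⟨x, hx⟩ := hne
  by_contra! h
  have hG := hasDerivAt_antideriv hg x
  rw [show antideriv g = fun _ => 0 from funext h] at hG
  exact hx (hG.unique (hasDerivAt_const x 0))

/-- On a set where `|t| ≥ |x|`, the decay bound at rate `|c| + 1` leaves a factor `e^{-c|x|}`
times an integrable `e^{-|t|}`. -/
lemma SuperexpDecay.abs_setIntegral_le (hg : SuperexpDecay g) (c : ℝ) :
    ∃ C, ∀ x (s : Set ℝ), MeasurableSet s → (∀ t ∈ s, |x| ≤ |t|) →
      |∫ t in s, g t| ≤ C * exp (-c * |x|) := by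
  obtain ⟨C, hC0, hC⟩ := (hg.2 (|c| + 1)).exists_pos
  rw [isBigOWith_top] at hC
  have hint := integrable_exp_neg_mul_abs one_pos
  refine ⟨C * ∫ t, exp (-1 * |t|), fun x s hs hxs => ?_⟩
  have hpt : ∀ t ∈ s, |g t| ≤ C * exp (-c * |x|) * exp (-1 * |t|) := fun t ht => by
    have := hC t
    simp only [norm_eq_abs, abs_exp] at this
    refine this.trans ?_
    rw [mul_assoc, ← exp_add]
    gcongr
    nlinarith [le_abs_self c, abs_nonneg c, hxs t ht, abs_nonneg x]
  calc |∫ t in s, g t| ≤ ∫ t in s, |g t| := abs_integral_le_integral_abs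
    _ ≤ ∫ t in s, C * exp (-c * |x|) * exp (-1 * |t|) :=
      setIntegral_mono_on hg.integrable.abs.integrableOn (hint.const_mul _).integrableOn hs hpt
    _ = C * exp (-c * |x|) * ∫ t in s, exp (-1 * |t|) := integral_const_mul _ _
    _ ≤ C * exp (-c * |x|) * ∫ t, exp (-1 * |t|) := by
      refine mul_le_mul_of_nonneg_left ?_ (mul_pos hC0 (exp_pos _)).le
      exact setIntegral_le_integral hint (Eventually.of_forall fun t => (exp_pos _).le)
    _ = _ := by ring

lemma SuperexpDecay.antideriv (hg : SuperexpDecay g) (h0 : ∫ x, g x = 0) :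
    SuperexpDecay (antideriv g) := by
  refine ⟨continuous_iff_continuousAt.2 fun x => (hasDerivAt_antideriv hg x).continuousAt,
    fun c => ?_⟩
  obtain ⟨C, hC⟩ := hg.abs_setIntegral_le c
  refine isBigO_top.2 ⟨C, fun x => ?_⟩
  rw [norm_eq_abs, norm_eq_abs, abs_exp]
  rcases le_or_gt x 0 with hx | hx
  · exact hC x _ measurableSet_Iic fun t ht => abs_le_abs_of_nonpos hx ht
  · rw [antideriv_eq_neg_setIntegral_Ioi hg.integrable h0, abs_neg]
    exact hC x _ measurableSet_Ioi fun t ht => abs_le_abs_of_nonneg hx.le (le_of_lt ht)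

lemma integral_antideriv_mul_polyExp (hg : SuperexpDecay g) (h0 : ∫ x, g x = 0)
    (q : ℝ[X]) (c : ℝ) :
    ∫ x, antideriv g x * ((derivative q + c • q).eval x * exp (c * x))
      = -∫ x, g x * (q.eval x * exp (c * x)) := by
  have hG := hg.antideriv h0
  have hv : ∀ x, HasDerivAt (fun y => q.eval y * exp (c * y))
      ((derivative q + c • q).eval x * exp (c * x)) x := fun x => by
    have hexp : HasDerivAt (fun y => exp (c * y)) (exp (c * x) * c) x := by
      simpa using ((hasDerivAt_id x).const_mul c).exp
    refine ((q.hasDerivAt x).mul hexp).congr_deriv ?_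
    simp only [eval_add, eval_smul, smul_eq_mul]
    ring
  have := integral_mul_deriv_eq_deriv_mul (fun x _ => hasDerivAt_antideriv hg x) (fun x _ => hv x)
    (hG.mul_polyExp _ c).integrable (hg.mul_polyExp q c).integrable
    ((hG.mul_polyExp q c).tendsto_cocompact.mono_left atBot_le_cocompact)
    ((hG.mul_polyExp q c).tendsto_cocompact.mono_left atTop_le_cocompact)
  simpa using this

end antideriv

def HasSignChanges (g : ℝ → ℝ) (m : ℕ) : Prop :=
  ∃ (t : ℕ → ℝ) (s : ℝ), (∀ i < m, t i < t (i + 1)) ∧ ∀ i ≤ m, 0 < s * (-1) ^ i * g (t i)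

namespace HasSignChanges

variable {G g w : ℝ → ℝ} {m : ℕ}

lemma zero_of_ne_zero (hne : ∃ x, g x ≠ 0) : HasSignChanges g 0 := by
  obtain ⟨x, hx⟩ := hne
  refine ⟨fun _ => x, g x, fun i hi => absurd hi i.not_lt_zero, fun i hi => ?_⟩
  obtain rfl := Nat.le_zero.1 hi
  simpa using mul_self_pos.2 hx

lemma of_mul_pos (h : HasSignChanges (fun x => g x * w x) m) (hw : ∀ x, 0 < w x) :
    HasSignChanges g m := by
  obtain ⟨t, s, ht, hs⟩ := h
  exact ⟨t, s, ht, fun i hi => (mul_pos_iff_of_pos_right (hw (t i))).1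
    (by simpa only [mul_assoc] using hs i hi)⟩

lemma of_increments (hG : ∀ x, HasDerivAt G (g x) x) {T : ℕ → ℝ} {s : ℝ} {n : ℕ}
    (hT : ∀ i ≤ n, T i < T (i + 1))
    (hD : ∀ i ≤ n, 0 < s * (-1) ^ i * (G (T (i + 1)) - G (T i))) : HasSignChanges g n := by
  have : ∀ i ≤ n, ∃ y ∈ Ioo (T i) (T (i + 1)), 0 < s * (-1) ^ i * g y := fun i hi => by
    obtain ⟨y, hy, hslope⟩ := exists_hasDerivAt_eq_slope G g (hT i hi)
      (fun x _ => (hG x).continuousAt.continuousWithinAt) (fun x _ => hG x)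
    refine ⟨y, hy, ?_⟩
    rw [hslope, mul_div_assoc']
    exact div_pos (hD i hi) (sub_pos.2 (hT i hi))
  choose! y hy hsign using this
  exact ⟨y, s, fun i hi => (hy i hi.le).2.trans (hy (i + 1) hi).1, hsign⟩

lemma deriv (hG : ∀ x, HasDerivAt G (g x) x) (h : HasSignChanges G (m + 1)) :
    HasSignChanges g m := by
  obtain ⟨t, s, ht, hs⟩ := h
  refine of_increments hG (s := -s) (fun i hi => ht i (by omega)) fun i hi => ?_
  calc 0 < s * (-1) ^ (i + 1) * G (t (i + 1)) + s * (-1) ^ i * G (t i) :=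
        add_pos (hs (i + 1) (by omega)) (hs i (by omega))
    _ = -s * (-1) ^ i * (G (t (i + 1)) - G (t i)) := by ring

/-- Choose `u < t 0` and `v > t m` where `|G|` is small: the increments of `G` along
`u, t 0, …, t m, v` then alternate in sign. -/
lemma of_tendsto (hG : ∀ x, HasDerivAt G (g x) x) (hlim : Tendsto G (cocompact ℝ) (𝓝 0))
    (h : HasSignChanges G m) : HasSignChanges g (m + 1) := by
  obtain ⟨t, s, ht, hs⟩ := h
  have hsmall : ∀ i ≤ m, ∀ᶠ x in cocompact ℝ, |s * (-1) ^ i * G x| < s * (-1) ^ i * G (t i) :=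
    fun i hi => Tendsto.eventually_lt_const (hs i hi) (by simpa using (hlim.const_mul _).abs)
  obtain ⟨u, hu, hut⟩ := ((hsmall 0 m.zero_le).filter_mono atBot_le_cocompact).and
    (eventually_lt_atBot (t 0)) |>.exists
  obtain ⟨v, hv, hvt⟩ := ((hsmall m le_rfl).filter_mono atTop_le_cocompact).and
    (eventually_gt_atTop (t m)) |>.exists
  let T : ℕ → ℝ := fun | 0 => u | j + 1 => if j ≤ m then t j else v
  refine of_increments hG (T := T) (s := s) (fun i hi => ?_) (fun i hi => ?_)
  · rcases i with _ | j
    · simpa [T] using hut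
    rcases (show j < m ∨ j = m by omega) with hj | rfl
    · simpa [T, hj.le, Nat.succ_le_of_lt hj] using ht j hj
    · simpa [T] using hvt
  · rcases i with _ | j
    · simp only [T, zero_le, if_true, pow_zero, mul_one, mul_sub] at hu ⊢
      linarith [le_abs_self (s * G u)]
    rcases (show j < m ∨ j = m by omega) with hj | rfl
    · simp only [T, hj.le, Nat.succ_le_of_lt hj, if_true]
      calc 0 < s * (-1) ^ (j + 1) * G (t (j + 1)) + s * (-1) ^ j * G (t j) :=
            add_pos (hs (j + 1) hj) (hs j hj.le)
        _ = _ := by ring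
    · simp only [T, le_rfl, if_true, if_false, Nat.not_succ_le_self]
      have := le_abs_self (s * (-1) ^ j * G v)
      have : s * (-1) ^ (j + 1) * (G v - G (t j))
          = s * (-1) ^ j * G (t j) - s * (-1) ^ j * G v := by ring
      linarith

end HasSignChanges

lemma Polynomial.le_natDegree_of_hasSignChanges {Q : ℝ[X]} {m : ℕ}
    (h : HasSignChanges (fun x => Q.eval x) m) : m ≤ Q.natDegree := by
  suffices derivative^[m] Q ≠ 0 by
    by_contra! hlt
    exact this (iterate_derivative_eq_zero hlt)
  induction m generalizing Q with
  | zero =>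
    rintro rfl
    obtain ⟨t, s, -, hs⟩ := h
    simpa using hs 0 le_rfl
  | succ m ih =>
    rw [Function.iterate_succ_apply]
    exact ih (h.deriv fun x => Q.hasDerivAt x)

section ODE

variable {K : Type*} [Field K]

lemma Polynomial.derivative_add_smul_ne_zero {c : K} (hc : c ≠ 0) {q : K[X]} (hq : q ≠ 0) :
    derivative q + c • q ≠ 0 := by
  have hdeg : (c • q).degree = q.degree := by rw [smul_eq_C_mul, degree_C_mul hc]
  intro h
  have := degree_add_eq_right_of_degree_lt (hdeg ▸ degree_derivative_lt hq)
  rw [h, hdeg, degree_zero, eq_comm, degree_eq_bot] at this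
  exact hq this

/-- `q ↦ q' + c q` is injective, hence onto, on `degreeLT K (p.natDegree + 1)`. -/
lemma Polynomial.exists_derivative_add_smul_eq {c : K} (hc : c ≠ 0) (p : K[X]) :
    ∃ q : K[X], q.natDegree ≤ p.natDegree ∧ derivative q + c • q = p := by
  let L : K[X] →ₗ[K] K[X] := derivative + c • LinearMap.id
  have hmaps : ∀ q ∈ degreeLT K (p.natDegree + 1), L q ∈ degreeLT K (p.natDegree + 1) :=
    fun q hq => Submodule.add_mem _
      (mem_degreeLT.2 (degree_derivative_le.trans_lt (mem_degreeLT.1 hq)))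
      (Submodule.smul_mem _ c hq)
  let D := L.restrict hmaps
  have hinj : Function.Injective D := by
    rw [← LinearMap.ker_eq_bot, LinearMap.ker_eq_bot']
    intro q hq
    by_contra hq0
    exact derivative_add_smul_ne_zero hc (fun h => hq0 (Subtype.ext h)) (congrArg Subtype.val hq)
  obtain ⟨⟨q, hq'⟩, hq⟩ := LinearMap.injective_iff_surjective.1 hinj
    ⟨p, by rw [degreeLT_succ_eq_degreeLE, mem_degreeLE]; exact degree_le_natDegree⟩
  refine ⟨q, ?_, congrArg Subtype.val hq⟩
  rw [degreeLT_succ_eq_degreeLE, mem_degreeLE] at hq'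
  exact natDegree_le_iff_degree_le.2 hq'

end ODE

def MomentsVanish (g : ℝ → ℝ) (c : ℝ) (l : ℕ) : Prop :=
  ∀ j < l, ∫ x, g x * (x ^ j * exp (c * x)) = 0

namespace MomentsVanish

variable {g : ℝ → ℝ} {c : ℝ} {l m : ℕ}

lemma integral_eq_zero (h : MomentsVanish g 0 (m + 1)) : ∫ x, g x = 0 := by
  simpa using h 0 m.succ_pos

lemma integral_mul_polyExp (hg : SuperexpDecay g) (h : MomentsVanish g c l) {q : ℝ[X]}
    (hq : q.natDegree < l) : ∫ x, g x * (q.eval x * exp (c * x)) = 0 := by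
  have hsum : (fun x => g x * (q.eval x * exp (c * x)))
      = fun x => ∑ i ∈ Finset.range l, q.coeff i * (g x * (x ^ i * exp (c * x))) := by
    funext x
    rw [eval_eq_sum_range' hq, Finset.sum_mul, Finset.mul_sum]
    exact Finset.sum_congr rfl fun i _ => by ring
  rw [hsum, integral_finsetSum _ fun i _ => by
    simpa using ((hg.mul_polyExp (X ^ i) c).const_mul (q.coeff i)).integrable]
  exact Finset.sum_eq_zero fun i hi => by
    rw [integral_const_mul, h i (Finset.mem_range.1 hi), mul_zero]

lemma antideriv_zero (hg : SuperexpDecay g) (h : MomentsVanish g 0 (m + 1)) :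
    MomentsVanish (antideriv g) 0 m := by
  intro j hj
  have key := integral_antideriv_mul_polyExp hg h.integral_eq_zero (X ^ (j + 1)) 0
  have hj1 : ∫ x, g x * x ^ (j + 1) = 0 := by simpa using h (j + 1) (by omega)
  have : ∫ x, ((j : ℝ) + 1) * (antideriv g x * x ^ j) = 0 := by
    simpa [hj1, mul_left_comm] using key
  rw [integral_const_mul] at this
  simpa [Nat.cast_add_one_ne_zero] using this

lemma antideriv (hc : c ≠ 0) (hg : SuperexpDecay g) (h0 : ∫ x, g x = 0)
    (h : MomentsVanish g c l) : MomentsVanish (antideriv g) c l := by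
  intro j hj
  obtain ⟨q, hq, hqX⟩ := exists_derivative_add_smul_eq hc (X ^ j : ℝ[X])
  have := integral_antideriv_mul_polyExp hg h0 q c
  rw [hqX, h.integral_mul_polyExp hg (hq.trans_lt (by simpa using hj)), neg_zero] at this
  simpa using this

end MomentsVanish

section SignChanges

variable {g : ℝ → ℝ}

lemma HasSignChanges.succ_of_antideriv (hg : SuperexpDecay g) (h0 : ∫ x, g x = 0) {m : ℕ}
    (h : HasSignChanges (antideriv g) m) : HasSignChanges g (m + 1) :=
  h.of_tendsto (hasDerivAt_antideriv hg) (hg.antideriv h0).tendsto_cocompact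

theorem hasSignChanges_of_momentsVanish (hg : SuperexpDecay g) (hne : ∃ x, g x ≠ 0) {m : ℕ}
    (h : MomentsVanish g 0 m) : HasSignChanges g m := by
  induction m generalizing g with
  | zero => exact .zero_of_ne_zero hne
  | succ m ih =>
    have h0 := h.integral_eq_zero
    exact (ih (hg.antideriv h0) (exists_antideriv_ne_zero hg hne)
      (h.antideriv_zero hg)).succ_of_antideriv hg h0

/-- Each primitive step spends one moment against `xʲ` and keeps all moments against
`xʲ e^{cx}`; once the former are exhausted, the latter are the moments of `g e^{cx}`. -/
theorem hasSignChanges_add_of_momentsVanish {c : ℝ} (hc : c ≠ 0)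
    (hg : SuperexpDecay g) (hne : ∃ x, g x ≠ 0) {l₁ l₂ : ℕ} (h₁ : MomentsVanish g c l₁)
    (h₂ : MomentsVanish g 0 l₂) : HasSignChanges g (l₁ + l₂) := by
  induction l₂ generalizing g with
  | zero =>
    have hge : SuperexpDecay (fun x => g x * exp (c * x)) := by
      simpa only [mul_comm] using hg.exp_mul c
    refine (hasSignChanges_of_momentsVanish hge ?_ fun j hj => ?_).of_mul_pos fun x => exp_pos _
    · obtain ⟨x, hx⟩ := hne
      exact ⟨x, mul_ne_zero hx (exp_pos _).ne'⟩
    · simpa [mul_assoc, mul_comm (exp _)] using h₁ j hj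
  | succ l₂ ih =>
    have h0 := h₂.integral_eq_zero
    exact (ih (hg.antideriv h0) (exists_antideriv_ne_zero hg hne) (h₁.antideriv hc hg h0)
      (h₂.antideriv_zero hg)).succ_of_antideriv hg h0

end SignChanges

theorem add_le_natDegree_of_orthogonal {w : ℝ → ℝ} (hw : SuperexpDecay w) (hpos : ∀ x, 0 < w x)
    {c : ℝ} (hc : c ≠ 0) {l₁ l₂ : ℕ} {Q : ℝ[X]} (hQ : Q ≠ 0)
    (h₁ : ∀ j < l₁, ∫ x, Q.eval x * x ^ j * (exp (c * x) * w x) = 0)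
    (h₂ : ∀ j < l₂, ∫ x, Q.eval x * x ^ j * w x = 0) : l₁ + l₂ ≤ Q.natDegree := by
  have hne : ∃ x, Q.eval x * w x ≠ 0 := by
    by_contra! h
    exact hQ (Polynomial.funext fun x => by simpa [(hpos x).ne'] using h x)
  refine le_natDegree_of_hasSignChanges
    ((hasSignChanges_add_of_momentsVanish hc (hw.poly_mul Q) hne
      (fun j hj => ?_) (fun j hj => ?_)).of_mul_pos hpos)
  · simpa [mul_assoc, mul_comm, mul_left_comm] using h₁ j hj
  · simpa [mul_assoc, mul_comm, mul_left_comm] using h₂ j hj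

theorem Polynomial.existsUnique_monic_of_le_natDegree {K E : Type*} [Field K] [AddCommGroup E]
    [Module K E] [FiniteDimensional K E] (L : K[X] →ₗ[K] E)
    (hL : ∀ Q : K[X], Q ≠ 0 → L Q = 0 → Module.finrank K E ≤ Q.natDegree) :
    ∃! P : K[X], P.Monic ∧ P.natDegree = Module.finrank K E ∧ L P = 0 := by
  set n := Module.finrank K E
  have hker : ∀ Q : K[X], Q.degree < n → L Q = 0 → Q = 0 := fun Q hQ hLQ => by
    by_contra hne
    exact (hL Q hne hLQ).not_gt ((natDegree_lt_iff_degree_lt hne).2 hQ)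
  have hinj : Function.Injective (L.domRestrict (degreeLT K n)) := by
    rw [← LinearMap.ker_eq_bot, LinearMap.ker_eq_bot']
    exact fun Q hQ => Subtype.ext (hker Q (mem_degreeLT.1 Q.2) hQ)
  have hdim : Module.finrank K (degreeLT K n) = n := by
    rw [(degreeLTEquiv K n).finrank_eq, Module.finrank_fin_fun]
  obtain ⟨⟨Q, hQ⟩, hLQ⟩ :=
    (LinearMap.injective_iff_surjective_of_finrank_eq_finrank hdim).1 hinj (-L (X ^ n))
  replace hLQ : L Q = -L (X ^ n) := hLQ
  rw [mem_degreeLT] at hQ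
  have hdeg : (X ^ n + Q).degree = (n : WithBot ℕ) := by
    rw [degree_add_eq_left_of_degree_lt (by rwa [degree_X_pow]), degree_X_pow]
  refine ⟨X ^ n + Q, ⟨monic_X_pow_add hQ, natDegree_eq_of_degree_eq_some hdeg,
    by rw [map_add, hLQ, add_neg_cancel]⟩, ?_⟩
  rintro P ⟨hPm, hPn, hLP⟩
  have hPdeg : P.degree = (n : WithBot ℕ) := by rw [degree_eq_natDegree hPm.ne_zero, hPn]
  rw [← sub_eq_zero]
  refine hker _ ?_ (by rw [map_sub, hLP, map_add, hLQ, add_neg_cancel, sub_zero])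
  exact hPdeg ▸ degree_sub_lt_left (hPdeg.trans hdeg.symm) hPm.ne_zero
    (by rw [hPm.leadingCoeff, (monic_X_pow_add hQ).leadingCoeff])

def weightedIntegral {w : ℝ → ℝ} (hw : SuperexpDecay w) : ℝ[X] →ₗ[ℝ] ℝ where
  toFun p := ∫ x, p.eval x * w x
  map_add' p q := by
    simp only [eval_add, add_mul]
    exact integral_add (hw.poly_mul p).integrable (hw.poly_mul q).integrable
  map_smul' a p := by simp only [eval_smul, smul_eq_mul, mul_assoc, integral_const_mul,
    RingHom.id_apply]

def momentMap {w₁ w₂ : ℝ → ℝ} (hw₁ : SuperexpDecay w₁) (hw₂ : SuperexpDecay w₂)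
    (k₁ k₂ : ℕ) : ℝ[X] →ₗ[ℝ] (Fin k₁ → ℝ) × (Fin k₂ → ℝ) :=
  (LinearMap.pi fun j : Fin k₁ =>
      (weightedIntegral hw₁).comp (LinearMap.mulRight ℝ (X ^ (j : ℕ)))).prod
    (LinearMap.pi fun j : Fin k₂ =>
      (weightedIntegral hw₂).comp (LinearMap.mulRight ℝ (X ^ (j : ℕ))))

lemma momentMap_eq_zero_iff {w₁ w₂ : ℝ → ℝ} (hw₁ : SuperexpDecay w₁) (hw₂ : SuperexpDecay w₂)
    {k₁ k₂ : ℕ} {P : ℝ[X]} :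
    momentMap hw₁ hw₂ k₁ k₂ P = 0 ↔
      (∀ j < k₁, ∫ x, P.eval x * x ^ j * w₁ x = 0) ∧
        (∀ j < k₂, ∫ x, P.eval x * x ^ j * w₂ x = 0) := by
  simp [momentMap, weightedIntegral, Prod.ext_iff, funext_iff, Fin.forall_iff]

lemma w1_eq_exp_mul_w2 (N a x : ℝ) : w1 N a x = exp (2 * N * a * x) * w2 N a x := by
  rw [w1, w2, ← exp_add]
  ring_nf

lemma superexpDecay_w2 {N : ℝ} (hN : 0 < N) (a : ℝ) : SuperexpDecay (w2 N a) := by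
  convert (superexpDecay_exp_neg_mul_sq (half_pos hN)).exp_mul (-(N * a)) using 1
  funext x
  rw [w2, ← exp_add]
  ring_nf

lemma superexpDecay_w1 {N : ℝ} (hN : 0 < N) (a : ℝ) : SuperexpDecay (w1 N a) := by
  simpa only [← w1_eq_exp_mul_w2] using (superexpDecay_w2 hN a).exp_mul (2 * N * a)

theorem add_le_natDegree_of_orthogonal_w1_w2 {N a : ℝ} (hN : 0 < N) (ha : a ≠ 0) {k₁ k₂ : ℕ}
    {Q : ℝ[X]} (hQ : Q ≠ 0) (h₁ : ∀ j < k₁, ∫ x, Q.eval x * x ^ j * w1 N a x = 0)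
    (h₂ : ∀ j < k₂, ∫ x, Q.eval x * x ^ j * w2 N a x = 0) : k₁ + k₂ ≤ Q.natDegree :=
  add_le_natDegree_of_orthogonal (superexpDecay_w2 hN a) (fun _ => exp_pos _)
    (by positivity : 2 * N * a ≠ 0) hQ (by simpa only [← w1_eq_exp_mul_w2] using h₁) h₂

/-- Existence and uniqueness of the multiple Hermite polynomials,
and non-vanishing of the normalization constants. -/
theorem statement12 (N a : ℝ) (hN : 0 < N) (ha : a ≠ 0) (k₁ k₂ : ℕ) :
    (∃! P : Polynomial ℝ, IsMHP N a k₁ k₂ P) ∧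
    ∀ P : Polynomial ℝ, IsMHP N a k₁ k₂ P → hc1 N a k₁ P ≠ 0 ∧ hc2 N a k₂ P ≠ 0 := by
  have hexists := existsUnique_monic_of_le_natDegree
    (momentMap (superexpDecay_w1 hN a) (superexpDecay_w2 hN a) k₁ k₂) fun Q hQ hLQ => by
      rw [momentMap_eq_zero_iff] at hLQ
      simpa using add_le_natDegree_of_orthogonal_w1_w2 hN ha hQ hLQ.1 hLQ.2
  simp only [Module.finrank_prod, Module.finrank_fin_fun, momentMap_eq_zero_iff] at hexists
  refine ⟨hexists, fun P ⟨hPm, hPn, h₁, h₂⟩ => ⟨fun h => ?_, fun h => ?_⟩⟩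
  · have := add_le_natDegree_of_orthogonal_w1_w2 hN ha (k₁ := k₁ + 1) hPm.ne_zero
      (fun j hj => (Nat.lt_succ_iff_lt_or_eq.1 hj).elim (h₁ j) (· ▸ h)) h₂
    omega
  · have := add_le_natDegree_of_orthogonal_w1_w2 hN ha (k₂ := k₂ + 1) hPm.ne_zero h₁
      (fun j hj => (Nat.lt_succ_iff_lt_or_eq.1 hj).elim (h₂ j) (· ▸ h))
    omega

end
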